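/- Let 𝒫 = {P_n : n ≥ 1} with P_n({0}) = 1 − 1/n and P_n({n}) = 1/n, and let φ(x) = min(1, (1 − x)⁺). Then for every real x ≥ 0 and every integer n ≥ 1, sup_{m ≥ 1} E_{P_m}[φ((x + Y)/n)] = φ(x/n), where Y denotes the identity random variable on ℕ distributed according to P_m. -/

import Mathlib

open MeasureTheory
open scoped ENNReal

/-- The family Q_n = (1 − 1/n)·δ_0 + (1/n)·δ_n on ℕ (for n ≥ 1). -/
noncomputable def Qmeas (n : ℕ) : Measure ℕ :=
  if n = 0 then Measure.dirac 0
  else (1 - 1 / (n : ℝ≥0∞)) • Measure.dirac 0 + (1 / (n : ℝ≥0∞)) • Measure.dirac n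

/-!
Under `Q_m` the expectation of `f` is `f 0 + (f m - f 0) / m`. If `f` is maximal at `0` this never
exceeds `f 0`, and if `f` is bounded below the correction is `O(1/m)`, so the supremum over `m` is
`f 0`. For `f y = φ ((x + y) / n)` both hold because `φ` is antitone and nonnegative.
-/

open Filter

lemma integral_Qmeas (f : ℕ → ℝ) {m : ℕ} (hm : m ≠ 0) :
    ∫ y, f y ∂(Qmeas m) = f 0 + (f m - f 0) / m := by
  have hinv_le : 1 / (m : ℝ≥0∞) ≤ 1 := by
    rw [one_div]; exact ENNReal.inv_le_one.mpr (by exact_mod_cast Nat.one_le_iff_ne_zero.mpr hm)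
  have hinv_ne_top : 1 / (m : ℝ≥0∞) ≠ ⊤ := ne_top_of_le_ne_top ENNReal.one_ne_top hinv_le
  have hdirac (a : ℕ) : Integrable f (Measure.dirac a) := integrable_dirac enorm_lt_top
  rw [Qmeas, if_neg hm,
    integral_add_measure ((hdirac 0).smul_measure (ENNReal.sub_ne_top ENNReal.one_ne_top))
      ((hdirac m).smul_measure hinv_ne_top),
    integral_smul_measure, integral_smul_measure, integral_dirac, integral_dirac,
    ENNReal.toReal_sub_of_le hinv_le ENNReal.one_ne_top]
  simp only [ENNReal.toReal_div, ENNReal.toReal_one, ENNReal.toReal_natCast, smul_eq_mul]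
  ring

lemma iSup_integral_Qmeas {f : ℕ → ℝ} {c : ℝ} (hmax : ∀ k, f k ≤ f 0)
    (hbdd : ∀ k, c ≤ f k) :
    (⨆ m : {m : ℕ // 1 ≤ m}, ∫ y, f y ∂(Qmeas m)) = f 0 := by
  have hm_ne (m : {m : ℕ // 1 ≤ m}) : (m : ℕ) ≠ 0 := Nat.one_le_iff_ne_zero.mp m.2
  have hle (m : {m : ℕ // 1 ≤ m}) : ∫ y, f y ∂(Qmeas m) ≤ f 0 := by
    rw [integral_Qmeas f (hm_ne m)]
    have : (f m - f 0) / (m : ℕ) ≤ 0 :=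
      div_nonpos_of_nonpos_of_nonneg (by linarith [hmax m]) (by positivity)
    linarith
  refine le_antisymm (ciSup_le hle) ?_
  have hlim : Tendsto (fun k : ℕ => f 0 - (f 0 - c) / k) atTop (nhds (f 0)) := by
    simpa using tendsto_const_nhds.sub (tendsto_const_div_atTop_nhds_zero_nat (f 0 - c))
  refine le_of_tendsto hlim (eventually_atTop.mpr ⟨1, fun k hk => ?_⟩)
  calc f 0 - (f 0 - c) / k ≤ ∫ y, f y ∂(Qmeas k) := by
        rw [integral_Qmeas f (Nat.one_le_iff_ne_zero.mp hk), sub_eq_add_neg, ← neg_div, neg_sub]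
        gcongr
        linarith [hbdd k]
    _ ≤ ⨆ m : {m : ℕ // 1 ≤ m}, ∫ y, f y ∂(Qmeas m) :=
        le_ciSup (f := fun m : {m : ℕ // 1 ≤ m} => ∫ y, f y ∂(Qmeas m))
          ⟨f 0, Set.forall_mem_range.mpr hle⟩ ⟨k, hk⟩

theorem stmt_11_general (φ : ℝ → ℝ) (hφ : φ = fun x => min 1 (max (1 - x) 0))
    (x : ℝ) (n : ℕ) :
    (⨆ m : {m : ℕ // 1 ≤ m}, ∫ y : ℕ, φ ((x + (y : ℝ)) / (n : ℝ)) ∂(Qmeas m)) =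
      φ (x / (n : ℝ)) := by
  have hφ_anti : Antitone φ := fun a b hab => by
    subst hφ; exact min_le_min_left _ (max_le_max_right _ (by linarith))
  have hφ_nonneg (a : ℝ) : 0 ≤ φ a := by
    subst hφ; exact le_min zero_le_one (le_max_right _ _)
  have hmax (k : ℕ) : φ ((x + k) / n) ≤ φ ((x + (0 : ℕ)) / n) :=
    hφ_anti (div_le_div_of_nonneg_right (by simp) n.cast_nonneg)
  simpa using iSup_integral_Qmeas hmax (fun k => hφ_nonneg _)

/-- With φ(x) = min(1, (1 − x)⁺), for every x ≥ 0 and integer n ≥ 1,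
    sup_{m ≥ 1} E_{Q_m}[φ((x + Y)/n)] = φ(x/n), where Y is the identity on ℕ. -/
theorem stmt_11 (φ : ℝ → ℝ) (hφ : φ = fun x => min 1 (max (1 - x) 0))
    (x : ℝ) (hx : 0 ≤ x) (n : ℕ) (hn : 1 ≤ n) :
    (⨆ m : {m : ℕ // 1 ≤ m}, ∫ y : ℕ, φ ((x + (y : ℝ)) / (n : ℝ)) ∂(Qmeas m)) =
      φ (x / (n : ℝ)) :=
  stmt_11_general φ hφ x n
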